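/- arXiv:1912.06956 — 2 statements merged into one kernel-verified Lean document; each statement's English description precedes it below -/
import Mathlib

section
/- Let θ ∈ [0,1], α ∈ ℝ, and let (W_j)_{j∈ℤ} be a sequence with values in {−1,1} such that sup{j : W_j = 1} = sup{j : W_j = −1} = ∞. Define G_j := W_j if (α − Σ_{k<j} W_k·2^{k+θ-1} + 2^{j+θ-1}) mod 2^{j+θ+1} ∈ [0, 2^{j+θ}), and G_j := −W_j otherwise. Then for every j ∈ ℤ, ⌊2^{−(j+θ)}·(α − Σ_{k<j} W_k·2^{k+θ-1}) + 1/2⌋ = Σ_{k≥j} (W_k − G_k)·2^{k−j−1}. -/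
open Real

/-- `a mod b := a - b * ⌊a / b⌋` for real numbers. -/
noncomputable def realMod (a b : ℝ) : ℝ := a - b * ⌊a / b⌋

/-!
Write `S_j` for the partial sum and `x_j = (α - S_j) / 2^(j+θ)`. Since
`S_{j+1} = S_j + W_j 2^(j+θ-1)`, we get `x_{j+1} = x_j / 2 - W_j / 4`, and the `mod` condition
defining `G_j` says exactly that the nearest integer `n_j = round x_j` is even. Checking the parity
of `n_j` gives `n_j = (W_j - G_j) / 2 + 2 n_{j+1}`. Once `W` has taken both values `±1` beyond the
scale of `|α|`, we have `|α - S_N| < 2^(N+θ-1)`, so `n_N = 0` for all large `N`, and the recursion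
telescopes into the finite sum on the right.
-/

lemma fract_div_two_lt_half_iff (z : ℝ) : Int.fract (z / 2) < 1 / 2 ↔ Even ⌊z⌋ := by
  have hfloor : ⌊z / 2⌋ = ⌊z⌋ / 2 := by simpa using Int.floor_div_natCast z 2
  calc Int.fract (z / 2) < 1 / 2 ↔ z < (2 * ⌊z / 2⌋ + 1 : ℤ) := by
        rw [Int.fract]; push_cast; constructor <;> intro <;> linarith
    _ ↔ ⌊z⌋ < 2 * ⌊z / 2⌋ + 1 := Int.floor_lt.symm
    _ ↔ Even ⌊z⌋ := by rw [hfloor, Int.even_iff]; omega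

lemma realMod_add_half_mem_Ico_iff {y P : ℝ} (hP : 0 < P) :
    realMod (y + P / 2) (2 * P) ∈ Set.Ico 0 P ↔ Even (round (y / P)) := by
  have hquot : (y + P / 2) / (2 * P) = (y / P + 1 / 2) / 2 := by field_simp
  have hmod : realMod (y + P / 2) (2 * P) = 2 * P * Int.fract ((y / P + 1 / 2) / 2) := by
    rw [realMod, Int.fract, ← hquot]; field_simp
  rw [hmod, round_eq, ← fract_div_two_lt_half_iff, Set.mem_Ico]
  have := Int.fract_nonneg ((y / P + 1 / 2) / 2)
  constructor
  · rintro ⟨-, h⟩; nlinarith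
  · intro h; constructor <;> nlinarith

lemma round_eq_digit_add_two_mul_round {x w : ℝ} (hw : w = -1 ∨ w = 1) :
    (round x : ℝ) = (w - if Even (round x) then w else -w) / 2 + 2 * round (x / 2 - w / 4) := by
  obtain ⟨hlo, hhi⟩ := round_eq_iff.mp (rfl : round x = round x)
  rcases Int.even_or_odd' (round x) with ⟨m, hm | hm⟩ <;> rw [hm] at hlo hhi ⊢ <;>
    push_cast at hlo hhi ⊢ <;> rcases hw with rfl | rfl
  · rw [if_pos (even_two_mul m), (round_eq_iff (n := m)).mpr ⟨by linarith, by linarith⟩]; ring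
  · rw [if_pos (even_two_mul m), (round_eq_iff (n := m)).mpr ⟨by linarith, by linarith⟩]; ring
  · rw [if_neg (Int.not_even_two_mul_add_one m),
      (round_eq_iff (n := m + 1)).mpr ⟨by push_cast; linarith, by push_cast; linarith⟩]
    push_cast; ring
  · rw [if_neg (Int.not_even_two_mul_add_one m),
      (round_eq_iff (n := m)).mpr ⟨by linarith, by linarith⟩]; ring

lemma hasSum_two_rpow_of_lt (θ : ℝ) (j : ℤ) :
    HasSum (fun k : ℤ => if k < j then (2 : ℝ) ^ ((k : ℝ) + θ - 1) else 0)
      ((2 : ℝ) ^ ((j : ℝ) + θ - 1)) := by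
  have hinj : Function.Injective fun n : ℕ => j - 1 - n := fun a b h => by simpa using h
  refine (hinj.hasSum_iff fun k hk => ?_).mp ?_
  · have : ¬ k < j := fun hkj => hk ⟨(j - 1 - k).toNat, by simp; omega⟩
    simp [this]
  · convert hasSum_geometric_two' ((2 : ℝ) ^ ((j : ℝ) + θ - 1)) using 1
    funext n
    have hexp : ((j - 1 - n : ℤ) : ℝ) + θ - 1 = ((j : ℝ) + θ - 1) - 1 - n := by push_cast; ring
    simp only [Function.comp, if_pos (by omega : j - 1 - (n : ℤ) < j), hexp]
    rw [Real.rpow_sub two_pos, Real.rpow_sub two_pos, Real.rpow_one, Real.rpow_natCast]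

section PartialSum

variable (θ : ℝ) (W : ℤ → ℝ)

noncomputable def partialSum (j : ℤ) : ℝ :=
  ∑' k : ℤ, if k < j then W k * (2 : ℝ) ^ ((k : ℝ) + θ - 1) else 0

variable {W}

lemma summable_partialSum (hW : ∀ j, W j = -1 ∨ W j = 1) (j : ℤ) :
    Summable fun k : ℤ => if k < j then W k * (2 : ℝ) ^ ((k : ℝ) + θ - 1) else 0 := by
  refine Summable.of_norm_bounded (hasSum_two_rpow_of_lt θ j).summable fun k => ?_
  split_ifs
  · rcases hW k with h | h <;> simp [h, abs_of_pos (Real.rpow_pos_of_pos two_pos _)]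
  · simp

lemma partialSum_succ (hW : ∀ j, W j = -1 ∨ W j = 1) (j : ℤ) :
    partialSum θ W (j + 1) = partialSum θ W j + W j * (2 : ℝ) ^ ((j : ℝ) + θ - 1) := by
  have hsplit : (fun k : ℤ => if k < j + 1 then W k * (2 : ℝ) ^ ((k : ℝ) + θ - 1) else 0) =
      fun k => (if k < j then W k * (2 : ℝ) ^ ((k : ℝ) + θ - 1) else 0) +
        if k = j then W j * (2 : ℝ) ^ ((j : ℝ) + θ - 1) else 0 := by
    funext k
    rcases lt_trichotomy k j with h | rfl | h
    · simp [h, h.ne, h.trans (lt_add_one j)]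
    · simp
    · simp [h.ne', not_lt.mpr h.le, not_lt.mpr (Int.add_one_le_iff.mpr h)]
  exact (((summable_partialSum θ hW j).hasSum.add (hasSum_ite_eq j _)).congr_fun
    (congrFun hsplit)).tsum_eq

lemma le_mul_partialSum (hW : ∀ j, W j = -1 ∨ W j = 1) {j N : ℤ} (hjN : j < N) :
    (2 : ℝ) ^ ((j : ℝ) + θ) - (2 : ℝ) ^ ((N : ℝ) + θ - 1) ≤ W j * partialSum θ W N := by
  have hcomparison : HasSum
      (fun k : ℤ => (if k = j then 2 * (2 : ℝ) ^ ((j : ℝ) + θ - 1) else 0) -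
        if k < N then (2 : ℝ) ^ ((k : ℝ) + θ - 1) else 0)
      ((2 : ℝ) ^ ((j : ℝ) + θ) - (2 : ℝ) ^ ((N : ℝ) + θ - 1)) := by
    have hdouble : 2 * (2 : ℝ) ^ ((j : ℝ) + θ - 1) = (2 : ℝ) ^ ((j : ℝ) + θ) := by
      rw [Real.rpow_sub_one two_ne_zero]; ring
    rw [← hdouble]
    exact (hasSum_ite_eq j _).sub (hasSum_two_rpow_of_lt θ N)
  refine hasSum_le (fun k => ?_) hcomparison ((summable_partialSum θ hW N).hasSum.mul_left (W j))
  have hpos : 0 < (2 : ℝ) ^ ((k : ℝ) + θ - 1) := Real.rpow_pos_of_pos two_pos _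
  by_cases hkj : k = j
  · subst hkj
    rcases hW k with h | h <;> simp [h, hjN] <;> linarith
  · split_ifs <;> rcases hW k with h | h <;> rcases hW j with h' | h' <;> simp [h, h'] <;> linarith

end PartialSum

noncomputable def scaled (θ α : ℝ) (W : ℤ → ℝ) (j : ℤ) : ℝ :=
  (α - partialSum θ W j) / (2 : ℝ) ^ ((j : ℝ) + θ)

lemma scaled_succ {θ α : ℝ} {W : ℤ → ℝ} (hW : ∀ j, W j = -1 ∨ W j = 1) (j : ℤ) :
    scaled θ α W (j + 1) = scaled θ α W j / 2 - W j / 4 := by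
  have hexp : ((j + 1 : ℤ) : ℝ) + θ = (j : ℝ) + θ + 1 := by push_cast; ring
  rw [scaled, scaled, partialSum_succ θ hW, hexp, Real.rpow_add_one two_ne_zero,
    Real.rpow_sub_one two_ne_zero]
  field_simp
  ring

lemma exists_round_scaled_eq_zero {θ α : ℝ} {W : ℤ → ℝ} (hW : ∀ j, W j = -1 ∨ W j = 1)
    (hWp : ∀ n : ℤ, ∃ j ≥ n, W j = 1) (hWm : ∀ n : ℤ, ∃ j ≥ n, W j = -1) :
    ∃ M : ℤ, ∀ N ≥ M, round (scaled θ α W N) = 0 := by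
  obtain ⟨n, hn⟩ := pow_unbounded_of_one_lt (|α| / 2 ^ θ) one_lt_two
  have hα : |α| < (2 : ℝ) ^ ((n : ℝ) + θ) := by
    rwa [Real.rpow_add two_pos, Real.rpow_natCast, ← div_lt_iff₀ (Real.rpow_pos_of_pos two_pos _)]
  have hmono : ∀ {j : ℤ}, (n : ℤ) ≤ j → (2 : ℝ) ^ ((n : ℝ) + θ) ≤ (2 : ℝ) ^ ((j : ℝ) + θ) :=
    fun h => Real.rpow_le_rpow_of_exponent_le one_le_two (by gcongr; exact_mod_cast h)
  obtain ⟨j₁, hj₁, hW₁⟩ := hWp n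
  obtain ⟨j₂, hj₂, hW₂⟩ := hWm n
  refine ⟨max j₁ j₂ + 1, fun N hN => ?_⟩
  have h₁ := le_mul_partialSum θ hW (j := j₁) (N := N) (by omega)
  have h₂ := le_mul_partialSum θ hW (j := j₂) (N := N) (by omega)
  rw [hW₁, one_mul] at h₁
  rw [hW₂, neg_one_mul] at h₂
  have hP : 0 < (2 : ℝ) ^ ((N : ℝ) + θ) := Real.rpow_pos_of_pos two_pos _
  have hhalf := Real.rpow_sub_one two_ne_zero ((N : ℝ) + θ)
  rw [round_eq_zero_iff, scaled, Set.mem_Ico, le_div_iff₀ hP, div_lt_iff₀ hP]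
  constructor <;> linarith [le_abs_self α, neg_abs_le α, hmono hj₁, hmono hj₂]

lemma tsum_digits_eq_of_eventually_eq_zero {n d : ℤ → ℝ}
    (hrec : ∀ t, n t = d t / 2 + 2 * n (t + 1)) {M : ℤ} (hM : ∀ t ≥ M, n t = 0) (j : ℤ) :
    ∑' k : ℤ, (if j ≤ k then d k * (2 : ℝ) ^ (k - j - 1) else 0) = n j := by
  have htelescope : ∀ N ≥ j,
      n j = ∑ k ∈ Finset.Ico j N, d k * (2 : ℝ) ^ (k - j - 1) + 2 ^ (N - j) * n N := by
    refine Int.leInduction (by simp) fun N hN ih => ?_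
    rw [Finset.Ico_add_one_right_eq_Icc, ← Finset.Ico_insert_right hN,
      Finset.sum_insert (by simp), ih, hrec N, zpow_sub_one₀ two_ne_zero,
      show N + 1 - j = N - j + 1 by ring, zpow_add_one₀ two_ne_zero]
    ring
  have hd : ∀ t ≥ M, d t = 0 := fun t ht => by
    have := hrec t
    rw [hM t ht, hM (t + 1) (by omega)] at this
    linarith
  rw [tsum_eq_sum (s := Finset.Ico j (max j M)) fun k hk => ?_,
    Finset.sum_congr rfl fun k hk => if_pos (Finset.mem_Ico.mp hk).1,
    htelescope _ (le_max_left j M), hM _ (le_max_right j M), mul_zero, add_zero]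
  split_ifs with hjk
  · rw [hd k (by simp at hk; omega), zero_mul]
  · rfl

theorem stmt3_general (θ : ℝ) (α : ℝ) (W : ℤ → ℝ)
    (hW : ∀ j, W j = -1 ∨ W j = 1)
    (hWp : ∀ n : ℤ, ∃ j ≥ n, W j = 1) (hWm : ∀ n : ℤ, ∃ j ≥ n, W j = -1)
    (G : ℤ → ℝ)
    (hG : ∀ j : ℤ, G j =
      if realMod (α - (∑' k : ℤ, if k < j then W k * (2:ℝ) ^ ((k:ℝ) + θ - 1) else 0)
            + (2:ℝ) ^ ((j:ℝ) + θ - 1)) ((2:ℝ) ^ ((j:ℝ) + θ + 1))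
          ∈ Set.Ico (0:ℝ) ((2:ℝ) ^ ((j:ℝ) + θ))
        then W j else -W j) :
    ∀ j : ℤ,
      (⌊(2:ℝ) ^ (-((j:ℝ) + θ)) *
          (α - (∑' k : ℤ, if k < j then W k * (2:ℝ) ^ ((k:ℝ) + θ - 1) else 0)) + 1/2⌋ : ℝ)
        = ∑' k : ℤ, if j ≤ k then (W k - G k) * (2:ℝ) ^ (k - j - 1) else 0 := by
  have hdigit : ∀ t, G t = if Even (round (scaled θ α W t)) then W t else -W t := by
    intro t
    have hcond := realMod_add_half_mem_Ico_iff (y := α - partialSum θ W t)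
      (Real.rpow_pos_of_pos two_pos ((t : ℝ) + θ))
    rw [← Real.rpow_sub_one two_ne_zero, two_mul, ← mul_two, ← Real.rpow_add_one two_ne_zero]
      at hcond
    rw [hG t]
    exact if_congr hcond rfl rfl
  have hrec : ∀ t, (round (scaled θ α W t) : ℝ) =
      (W t - G t) / 2 + 2 * round (scaled θ α W (t + 1)) := fun t => by
    rw [hdigit t, scaled_succ hW]
    exact round_eq_digit_add_two_mul_round (hW t)
  obtain ⟨M, hM⟩ := exists_round_scaled_eq_zero (α := α) (θ := θ) hW hWp hWm
  intro j
  rw [tsum_digits_eq_of_eventually_eq_zero hrec (M := M) (fun t ht => by simp [hM t ht]) j, scaled,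
    Real.rpow_neg zero_le_two, inv_mul_eq_div, ← round_eq]
  rfl

theorem stmt3 (θ : ℝ) (hθ : θ ∈ Set.Icc (0:ℝ) 1) (α : ℝ) (W : ℤ → ℝ)
    (hW : ∀ j, W j = -1 ∨ W j = 1)
    (hWp : ∀ n : ℤ, ∃ j ≥ n, W j = 1) (hWm : ∀ n : ℤ, ∃ j ≥ n, W j = -1)
    (G : ℤ → ℝ)
    (hG : ∀ j : ℤ, G j =
      if realMod (α - (∑' k : ℤ, if k < j then W k * (2:ℝ) ^ ((k:ℝ) + θ - 1) else 0)
            + (2:ℝ) ^ ((j:ℝ) + θ - 1)) ((2:ℝ) ^ ((j:ℝ) + θ + 1))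
          ∈ Set.Ico (0:ℝ) ((2:ℝ) ^ ((j:ℝ) + θ))
        then W j else -W j) :
    ∀ j : ℤ,
      (⌊(2:ℝ) ^ (-((j:ℝ) + θ)) *
          (α - (∑' k : ℤ, if k < j then W k * (2:ℝ) ^ ((k:ℝ) + θ - 1) else 0)) + 1/2⌋ : ℝ)
        = ∑' k : ℤ, if j ≤ k then (W k - G k) * (2:ℝ) ^ (k - j - 1) else 0 :=
  stmt3_general θ α W hW hWp hWm G hG
end

section
/- Let Z be a real-valued random variable with Z ≥ 1 almost surely and E[ln Z] finite. Then E[(erf(Z/√2))³] ≤ erf(exp(E[ln Z])/√2). -/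
/-!
On `[0, ∞)` the map `γ ↦ erf (exp γ / √2)` is concave: its derivative is
`√(2/π) exp (γ - exp γ ^ 2 / 2)`, whose derivative carries the factor `1 - exp γ ^ 2 ≤ 0`.
Since `erf` takes values in `[0, 1]` on `[0, ∞)`, we have
`erf (Z / √2) ^ 3 ≤ erf (exp (log Z) / √2)`, and Jensen's inequality for `log Z ≥ 0` concludes.
-/

open Real MeasureTheory

/-- The error function `erf x = ∫_{-x}^{x} e^{-t²}/√π dt`. -/
noncomputable def erf (x : ℝ) : ℝ := ∫ t in (-x)..x, Real.exp (-t ^ 2) / Real.sqrt π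

open Set

lemma continuous_exp_neg_sq_div : Continuous fun t : ℝ => exp (-t ^ 2) / √π := by fun_prop

lemma erf_eq_two_mul_integral (x : ℝ) : erf x = 2 * ∫ t in (0 : ℝ)..x, exp (-t ^ 2) / √π := by
  have hint := continuous_exp_neg_sq_div.intervalIntegrable (μ := volume)
  have hneg : ∫ t in -x..0, exp (-t ^ 2) / √π = ∫ t in (0 : ℝ)..x, exp (-t ^ 2) / √π := by
    have := intervalIntegral.integral_comp_neg (a := 0) (b := x) fun t => exp (-t ^ 2) / √π
    simp only [neg_zero, neg_sq] at this
    exact this.symm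
  rw [erf, ← intervalIntegral.integral_add_adjacent_intervals (hint _ 0) (hint 0 _), hneg]
  ring

lemma hasDerivAt_erf (x : ℝ) : HasDerivAt erf (2 * (exp (-x ^ 2) / √π)) x := by
  have := (intervalIntegral.integral_hasDerivAt_right
    (continuous_exp_neg_sq_div.intervalIntegrable 0 x)
    continuous_exp_neg_sq_div.aestronglyMeasurable.stronglyMeasurableAtFilter
    continuous_exp_neg_sq_div.continuousAt).const_mul 2
  simpa only [← erf_eq_two_mul_integral] using this

lemma continuous_erf : Continuous erf :=
  continuous_iff_continuousAt.2 fun x => (hasDerivAt_erf x).continuousAt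

lemma erf_nonneg {x : ℝ} (hx : 0 ≤ x) : 0 ≤ erf x := by
  rw [erf_eq_two_mul_integral]
  exact mul_nonneg zero_le_two (intervalIntegral.integral_nonneg hx fun t _ => by positivity)

lemma erf_le_one (x : ℝ) : erf x ≤ 1 := by
  rcases le_total x 0 with hx | hx
  · have : 0 ≤ ∫ t in x..-x, exp (-t ^ 2) / √π :=
      intervalIntegral.integral_nonneg (by linarith) fun t _ => by positivity
    rw [erf, intervalIntegral.integral_symm]
    linarith
  · have hint : Integrable fun t : ℝ => exp (-t ^ 2) / √π := by
      simpa using (integrable_exp_neg_mul_sq one_pos).div_const √π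
    have htotal : ∫ t, exp (-t ^ 2) / √π = 1 := by
      have := integral_gaussian 1
      simp only [neg_mul, one_mul, div_one] at this
      rw [integral_div, this, div_self (by positivity)]
    rw [erf, intervalIntegral.integral_of_le (by linarith), ← htotal]
    exact setIntegral_le_integral hint (.of_forall fun t => by positivity)

lemma hasDerivAt_erf_exp_div_sqrt_two (γ : ℝ) :
    HasDerivAt (fun γ => erf (exp γ / √2)) (√2 / √π * exp (γ - exp γ ^ 2 / 2)) γ := by
  refine ((hasDerivAt_erf _).comp γ ((hasDerivAt_exp γ).div_const √2)).congr_deriv ?_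
  have h2 : √2 ^ 2 = 2 := sq_sqrt zero_le_two
  rw [div_pow, h2, sub_eq_add_neg, exp_add]
  field_simp
  rw [h2]

lemma concaveOn_erf_exp_div_sqrt_two : ConcaveOn ℝ (Ici 0) fun γ => erf (exp γ / √2) := by
  have hderiv2 (γ : ℝ) : HasDerivAt (fun γ => √2 / √π * exp (γ - exp γ ^ 2 / 2))
      (√2 / √π * exp (γ - exp γ ^ 2 / 2) * (1 - exp γ ^ 2)) γ := by
    have := ((hasDerivAt_id' γ).fun_sub
      (((hasDerivAt_exp γ).fun_pow 2).div_const 2)).exp.const_mul (√2 / √π)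
    refine this.congr_deriv ?_
    simp only [Nat.cast_ofNat]
    ring
  refine concaveOn_of_hasDerivWithinAt2_nonpos (convex_Ici 0)
    (continuous_erf.comp (by fun_prop)).continuousOn
    (fun γ _ => (hasDerivAt_erf_exp_div_sqrt_two γ).hasDerivWithinAt)
    (fun γ _ => (hderiv2 γ).hasDerivWithinAt) fun γ hγ => ?_
  rw [interior_Ici] at hγ
  have : 1 ≤ exp γ ^ 2 := one_le_pow₀ (one_le_exp hγ.le)
  exact mul_nonpos_of_nonneg_of_nonpos (by positivity) (by linarith)

theorem stmt12_general {Ω : Type*} [MeasurableSpace Ω] (P : Measure Ω) [IsProbabilityMeasure P]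
    (Z : Ω → ℝ) (hZ1 : ∀ᵐ ω ∂P, 1 ≤ Z ω)
    (hZint : Integrable (fun ω => Real.log (Z ω)) P) :
    (∫ ω, (erf (Z ω / Real.sqrt 2)) ^ 3 ∂P)
      ≤ erf (Real.exp (∫ ω, Real.log (Z ω) ∂P) / Real.sqrt 2) := by
  set f : ℝ → ℝ := fun γ => erf (exp γ / √2)
  have hf_mem (γ : ℝ) : f γ ∈ Icc 0 1 := ⟨erf_nonneg (by positivity), erf_le_one _⟩
  have hf_cont : Continuous f := continuous_erf.comp (by fun_prop)
  have hf_int (n : ℕ) : Integrable (fun ω => f (log (Z ω)) ^ n) P :=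
    .of_bound ((hf_cont.comp_aestronglyMeasurable hZint.1).pow n) 1 <| .of_forall fun ω => by
      rw [norm_pow, Real.norm_of_nonneg (hf_mem _).1]
      exact pow_le_one₀ (hf_mem _).1 (hf_mem _).2
  have hf_int_one : Integrable (fun ω => f (log (Z ω))) P := by simpa using hf_int 1
  have hcube_eq : (fun ω => erf (Z ω / √2) ^ 3) =ᵐ[P] fun ω => f (log (Z ω)) ^ 3 := by
    filter_upwards [hZ1] with ω hω
    simp only [f, exp_log (by linarith : 0 < Z ω)]
  calc ∫ ω, erf (Z ω / √2) ^ 3 ∂P = ∫ ω, f (log (Z ω)) ^ 3 ∂P := integral_congr_ae hcube_eq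
    _ ≤ ∫ ω, f (log (Z ω)) ∂P := integral_mono (hf_int 3) hf_int_one fun ω =>
      pow_le_of_le_one (hf_mem _).1 (hf_mem _).2 three_ne_zero
    _ ≤ f (∫ ω, log (Z ω) ∂P) := concaveOn_erf_exp_div_sqrt_two.le_map_integral
      hf_cont.continuousOn isClosed_Ici (hZ1.mono fun ω hω => log_nonneg hω) hZint
      hf_int_one

theorem stmt12 {Ω : Type*} [MeasurableSpace Ω] (P : Measure Ω) [IsProbabilityMeasure P]
    (Z : Ω → ℝ) (hZmeas : Measurable Z) (hZ1 : ∀ᵐ ω ∂P, 1 ≤ Z ω)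
    (hZint : Integrable (fun ω => Real.log (Z ω)) P) :
    (∫ ω, (erf (Z ω / Real.sqrt 2)) ^ 3 ∂P)
      ≤ erf (Real.exp (∫ ω, Real.log (Z ω) ∂P) / Real.sqrt 2) :=
  stmt12_general P Z hZ1 hZint
end
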